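/- arXiv:2201.02579 — 6 statements merged into one kernel-verified Lean document; each statement's English description precedes it below -/
import Mathlib

section
/- Let n ≥ 4, let C be the (n−1)×(n−1) circulant matrix circ(1,0,…,0,1), let M = [[𝟏ᵀ, 0ᵀ],[I_{n−1}, C]], X = 2(CCᵀ + I_{n−1})⁻¹((n−1)I_{n−1} − J_{n−1}), Y = J_{n−1} + CᵀX, and H = (1/(2(n−1))) · [[2·𝟏, X],[−𝟏, Y]]. Then M H = I_n; in particular H is a right inverse of M. -/
/-!
Multiplying out the blocks, `2(n-1) · M H = [[𝟏ᵀ(2·𝟏), 𝟏ᵀX], [2·𝟏 - C𝟏, X + CY]]`, and everything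
rests on `C` having all row and column sums equal to `2`. Writing `A = CCᵀ + I` and
`B = (n-1)I - J`, we have `AX = 2B`. Since `𝟏ᵀA = 5·𝟏ᵀ` and `𝟏ᵀB = 0`, this gives `𝟏ᵀX = 0`;
and `X + CY = AX + CJ = 2B + 2J = 2(n-1)I`.
-/

open Matrix

noncomputable section

/-- The circulant matrix of order `m` with defining vector `v`:
its `(i,j)` entry is `v ((j - i) mod m)`. -/
def circ {m : ℕ} (v : Fin m → ℝ) : Matrix (Fin m) (Fin m) ℝ :=
  Matrix.of fun i j => v (j - i)

/-- The `m × m` all-ones matrix. -/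
def Jmat (m : ℕ) : Matrix (Fin m) (Fin m) ℝ := Matrix.of fun _ _ => 1

section RowColSums
variable {R ι m : Type*} [Fintype m]

theorem Matrix.mul_of_const [NonUnitalNonAssocSemiring R] {C : Matrix m m R} {c : R}
    (hrow : ∀ i, ∑ j, C i j = c) (a : R) :
    C * (of fun _ _ => a : Matrix m ι R) = of fun _ _ => c * a := by
  ext i k
  simp [Matrix.mul_apply, ← Finset.sum_mul, hrow]

theorem Matrix.of_const_mul [NonUnitalNonAssocSemiring R] {C : Matrix m m R} {c : R}
    (hcol : ∀ j, ∑ i, C i j = c) (a : R) :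
    (of fun _ _ => a : Matrix ι m R) * C = of fun _ _ => a * c := by
  ext k j
  simp [Matrix.mul_apply, ← Finset.mul_sum, hcol]

end RowColSums

theorem sum_circ_row {m : ℕ} [NeZero m] (v : Fin m → ℝ) (i : Fin m) :
    ∑ j, circ v i j = ∑ k, v k :=
  Fintype.sum_equiv (Equiv.subRight i) _ _ fun _ => rfl

theorem sum_circ_col {m : ℕ} [NeZero m] (v : Fin m → ℝ) (j : Fin m) :
    ∑ i, circ v i j = ∑ k, v k :=
  Fintype.sum_equiv (Equiv.subLeft j) _ _ fun _ => rfl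

theorem Fin.sum_ite_val_eq_zero_or_eq {R : Type*} [AddCommMonoidWithOne R] {m a : ℕ}
    (ha₀ : a ≠ 0) (ha : a < m) :
    ∑ k : Fin m, (if k.val = 0 ∨ k.val = a then (1 : R) else 0) = 2 := by
  rw [Fin.sum_univ_eq_sum_range (fun k => if k = 0 ∨ k = a then (1 : R) else 0), Finset.sum_boole,
    Finset.filter_or, Finset.card_union_of_disjoint]
  · simp [Finset.filter_eq', ha, show 0 < m by omega, one_add_one_eq_two]
  · simp only [Finset.disjoint_left, Finset.mem_filter]
    rintro k ⟨-, rfl⟩ ⟨-, rfl⟩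
    exact ha₀ rfl

section Wheel
variable {ι m : Type*} [Fintype m] [DecidableEq m] {C X : Matrix m m ℝ}

theorem isUnit_det_mul_transpose_add_one (C : Matrix m m ℝ) : IsUnit (C * Cᵀ + 1).det := by
  have hpsd : (C * Cᵀ).PosSemidef := by
    simpa only [conjTranspose_eq_transpose_of_trivial] using posSemidef_self_mul_conjTranspose C
  exact (isUnit_iff_isUnit_det _).mp (PosDef.posSemidef_add hpsd PosDef.one).isUnit

theorem of_one_mul_eq_zero (hrow : ∀ i, ∑ j, C i j = 2) (hcol : ∀ j, ∑ i, C i j = 2)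
    (hX : (C * Cᵀ + 1) * X = (2 : ℝ) • ((Fintype.card m : ℝ) • 1 - of fun _ _ => 1)) :
    (of fun _ _ => 1 : Matrix ι m ℝ) * X = 0 := by
  set u : Matrix ι m ℝ := of fun _ _ => 1
  have hu : u * (C * Cᵀ + 1) = (5 : ℝ) • u := by
    rw [Matrix.mul_add, ← Matrix.mul_assoc, of_const_mul hcol, of_const_mul (C := Cᵀ) hrow]
    ext; simp [u]; norm_num
  have h5 : (5 : ℝ) • (u * X) = 0 := by
    rw [← smul_mul, ← hu, Matrix.mul_assoc, hX, Matrix.mul_smul, Matrix.mul_sub, Matrix.mul_smul,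
      Matrix.mul_one, of_const_mul (c := (Fintype.card m : ℝ)) (fun _ => by simp)]
    ext; simp [u]
  exact (smul_eq_zero.mp h5).resolve_left (by norm_num)

theorem add_mul_add_transpose_mul (hrow : ∀ i, ∑ j, C i j = 2)
    (hX : (C * Cᵀ + 1) * X = (2 : ℝ) • ((Fintype.card m : ℝ) • 1 - of fun _ _ => 1)) :
    X + C * ((of fun _ _ => 1) + Cᵀ * X) = (2 * Fintype.card m : ℝ) • 1 := by
  have hAX : X + C * Cᵀ * X = (C * Cᵀ + 1) * X := by rw [Matrix.add_mul, Matrix.one_mul, add_comm]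
  rw [Matrix.mul_add, mul_of_const hrow, ← Matrix.mul_assoc, add_left_comm, hAX, hX, smul_sub,
    smul_smul]
  ext; simp

theorem fromBlocks_mul_fromBlocks_eq_smul_one [Unique ι] [DecidableEq ι]
    (hrow : ∀ i, ∑ j, C i j = 2) (hcol : ∀ j, ∑ i, C i j = 2)
    (hX : (C * Cᵀ + 1) * X = (2 : ℝ) • ((Fintype.card m : ℝ) • 1 - of fun _ _ => 1)) :
    fromBlocks (of fun _ _ => 1 : Matrix ι m ℝ) 0 1 C *
        fromBlocks (of fun _ _ => 2) X (of fun _ _ => -1) ((of fun _ _ => 1) + Cᵀ * X) =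
      (2 * Fintype.card m : ℝ) • (1 : Matrix (ι ⊕ m) (ι ⊕ m) ℝ) := by
  rw [fromBlocks_multiply, ← fromBlocks_one, fromBlocks_smul, smul_zero, smul_zero,
    of_one_mul_eq_zero hrow hcol hX, Matrix.one_mul, Matrix.one_mul, mul_of_const hrow,
    add_mul_add_transpose_mul hrow hX]
  simp only [Matrix.zero_mul, add_zero]
  congr 1
  · ext i j
    simp [Matrix.mul_apply, Subsingleton.elim i j, mul_comm]
  · ext; simp

end Wheel

theorem wheel_incidence_right_inverse (n : ℕ) (hn : 4 ≤ n)
    (C X Y : Matrix (Fin (n-1)) (Fin (n-1)) ℝ)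
    (hC : C = circ (fun k => if k.val = 0 ∨ k.val = n - 2 then (1:ℝ) else 0))
    (hX : X = (2:ℝ) • ((C * Cᵀ + 1)⁻¹ * (((n:ℝ) - 1) • (1 : Matrix (Fin (n-1)) (Fin (n-1)) ℝ) - Jmat (n-1))))
    (hY : Y = Jmat (n-1) + Cᵀ * X)
    (M : Matrix (Fin 1 ⊕ Fin (n-1)) (Fin (n-1) ⊕ Fin (n-1)) ℝ)
    (hM : M = Matrix.fromBlocks (Matrix.of fun _ _ => 1) 0 1 C)
    (H : Matrix (Fin (n-1) ⊕ Fin (n-1)) (Fin 1 ⊕ Fin (n-1)) ℝ)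
    (hH : H = (1 / (2 * ((n:ℝ) - 1))) •
      Matrix.fromBlocks (Matrix.of fun _ _ => 2) X (Matrix.of fun _ _ => -1) Y) :
    M * H = 1 := by
  have : NeZero (n - 1) := ⟨by omega⟩
  have hsum : ∑ k : Fin (n - 1), (if k.val = 0 ∨ k.val = n - 2 then (1 : ℝ) else 0) = 2 :=
    Fin.sum_ite_val_eq_zero_or_eq (by omega) (by omega)
  have hrow : ∀ i, ∑ j, C i j = 2 := fun i => by rw [hC, sum_circ_row, hsum]
  have hcol : ∀ j, ∑ i, C i j = 2 := fun j => by rw [hC, sum_circ_col, hsum]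
  have hcard : (Fintype.card (Fin (n - 1)) : ℝ) = n - 1 := by
    rw [Fintype.card_fin, Nat.cast_sub (by omega), Nat.cast_one]
  have hAX : (C * Cᵀ + 1) * X =
      (2 : ℝ) • ((Fintype.card (Fin (n - 1)) : ℝ) • 1 - Jmat (n - 1)) := by
    rw [hX, hcard, Matrix.mul_smul,
      mul_nonsing_inv_cancel_left _ _ (isUnit_det_mul_transpose_add_one C)]
  have hn₁ : (0 : ℝ) < n - 1 := by
    have : (4 : ℝ) ≤ n := by exact_mod_cast hn
    linarith
  rw [hM, hH, hY, Matrix.mul_smul, Jmat, fromBlocks_mul_fromBlocks_eq_smul_one hrow hcol hAX,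
    smul_smul, hcard, one_div, inv_mul_cancel₀ (by positivity), one_smul]
end
end

section
/- Let n > 3 be an integer. The inverse of the n×n circulant matrix circ(3,1,0,…,0,1) is the circulant matrix circ(a_0, a_1, …, a_{n−1}) where, for 0 ≤ j ≤ n−1, a_j = (2^{n−j}/√5) · [ (−3+√5)^j / (2^n − (−3+√5)^n) − (−3−√5)^j / (2^n − (−3−√5)^n) ]. -/
/-! Let `x, y = (-3 ± √5) / 2` be the roots of `t² + 3t + 1`, so `x * y = 1` and `x + y = -3`; the
claimed entries are `a_j = (x^j / (1 - x^n) - y^j / (1 - y^n)) / (x - y)`. A product of circulants is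
the circulant of the cyclic convolution of their vectors, so it suffices that
`3 a_d + a_{d-1} + a_{d+1} = [d = 0]` for `d ∈ ℤ/n`. Away from the wrap-around this is the recurrence
`a_j + 3 a_{j+1} + a_{j+2} = 0` satisfied by `x^j` and `y^j`; at the ends one uses `a_n = a_0` and
`3 a_0 + a_1 + a_{n-1} = 1`, both direct computations. -/

open Matrix

noncomputable section

lemma circ_mul_circ {n : ℕ} [NeZero n] (v w : Fin n → ℝ) :
    circ v * circ w = circ fun d => ∑ k, v k * w (d - k) := by
  ext i j
  simp only [circ, mul_apply, of_apply]
  exact Fintype.sum_equiv (Equiv.subRight i) _ _ fun l => by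
    rw [Equiv.subRight_apply, sub_sub_sub_cancel_right]

lemma circ_single_zero {n : ℕ} [NeZero n] : circ (Pi.single 0 1) = (1 : Matrix (Fin n) (Fin n) ℝ) := by
  ext i j
  simp only [circ, of_apply, Pi.single_apply, sub_eq_zero, one_apply, eq_comm]

def tridiagVec (n : ℕ) (c₀ c₁ : ℝ) : Fin n → ℝ :=
  fun k => if k.val = 0 then c₀ else if k.val = 1 ∨ k.val = n - 1 then c₁ else 0

lemma tridiagVec_eq {m : ℕ} (c₀ c₁ : ℝ) :
    tridiagVec (m + 3) c₀ c₁ =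
      Pi.single 0 c₀ + Pi.single 1 c₁ + Pi.single (-1) c₁ := by
  funext k
  have h0 : k = 0 ↔ k.val = 0 := Fin.ext_iff
  have h1 : k = 1 ↔ k.val = 1 := by rw [Fin.ext_iff, Fin.val_one]
  have h2 : k = -1 ↔ k.val = m + 2 := by rw [Fin.ext_iff, Fin.coe_neg_one]
  simp only [tridiagVec, Pi.add_apply, Pi.single_apply, h0, h1, h2]
  split_ifs <;> first | (exfalso; omega) | ring

lemma sum_tridiagVec_mul {m : ℕ} (c₀ c₁ : ℝ) (w : Fin (m + 3) → ℝ) (d : Fin (m + 3)) :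
    ∑ k, tridiagVec (m + 3) c₀ c₁ k * w (d - k) = c₀ * w d + c₁ * (w (d - 1) + w (d + 1)) := by
  simp only [tridiagVec_eq, Pi.add_apply, add_mul, Finset.sum_add_distrib, Pi.single_apply,
    ite_mul, zero_mul, Finset.sum_ite_eq', Finset.mem_univ, if_true, sub_zero, sub_neg_eq_add]
  ring

lemma add_neighbours_eq_single_of_recurrence {m : ℕ} {c : ℝ} {G : ℕ → ℝ}
    (hrec : ∀ j, G j + c * G (j + 1) + G (j + 2) = 0) (hper : G (m + 1) = G 0)
    (hbd : c * G 0 + G 1 + G m = 1) (d : Fin (m + 1)) :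
    c * G d + (G ↑(d - 1) + G ↑(d + 1)) = (Pi.single 0 1 : Fin (m + 1) → ℝ) d := by
  rw [Fin.val_add_one, Fin.coe_sub_one, Pi.single_apply]
  by_cases h0 : d = 0
  · subst h0
    rw [if_pos rfl, if_pos rfl, Fin.val_zero]
    split_ifs with hl
    · obtain rfl : m = 0 := by rw [Fin.ext_iff, Fin.val_zero, Fin.val_last] at hl; exact hl.symm
      rw [zero_add] at hper
      linarith
    · rw [zero_add]
      linarith
  · obtain ⟨j, hj⟩ : ∃ j, d.val = j + 1 := ⟨d.val - 1, by have := Fin.val_ne_zero_iff.mpr h0; omega⟩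
    rw [if_neg h0, if_neg h0, hj, Nat.add_sub_cancel]
    split_ifs with hl
    · obtain rfl : m = j + 1 := by rw [← hj, hl, Fin.val_last]
      linarith [hrec j]
    · linarith [hrec j]

def tridiagCircInv (x y : ℝ) (n j : ℕ) : ℝ :=
  (x ^ j / (1 - x ^ n) - y ^ j / (1 - y ^ n)) / (x - y)

section
variable {x y : ℝ}

lemma tridiagCircInv_recurrence (hxy : x * y = 1) (n j : ℕ) :
    tridiagCircInv x y n j + -(x + y) * tridiagCircInv x y n (j + 1) +
      tridiagCircInv x y n (j + 2) = 0 := by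
  unfold tridiagCircInv
  linear_combination (-(x ^ j / (1 - x ^ n) - y ^ j / (1 - y ^ n)) / (x - y)) * hxy

lemma tridiagCircInv_period (n : ℕ) (hx : x ^ n ≠ 1) (hy : y ^ n ≠ 1) :
    tridiagCircInv x y n n = tridiagCircInv x y n 0 := by
  have hx' : 1 - x ^ n ≠ 0 := sub_ne_zero.mpr hx.symm
  have hy' : 1 - y ^ n ≠ 0 := sub_ne_zero.mpr hy.symm
  unfold tridiagCircInv
  congr 1
  field_simp
  ring

lemma tridiagCircInv_boundary (m : ℕ) (hxy : x * y = 1) (hne : x ≠ y) (hx : x ^ (m + 1) ≠ 1)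
    (hy : y ^ (m + 1) ≠ 1) :
    -(x + y) * tridiagCircInv x y (m + 1) 0 + tridiagCircInv x y (m + 1) 1 +
      tridiagCircInv x y (m + 1) m = 1 := by
  -- As `x ^ m = y * x ^ (m + 1)`, the term at `m` exceeds by `1` the value at `-1` that the
  -- recurrence would give, and the recurrence at `-1` is the claim with `0` on the right.
  rw [pow_succ'] at hx hy
  have hx' : 1 - x * x ^ m ≠ 0 := sub_ne_zero.mpr hx.symm
  have hy' : 1 - y * y ^ m ≠ 0 := sub_ne_zero.mpr hy.symm
  have hne' : x - y ≠ 0 := sub_ne_zero.mpr hne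
  unfold tridiagCircInv
  rw [pow_zero, pow_one, pow_succ' x, pow_succ' y]
  field_simp
  linear_combination (-(x ^ m - y ^ m + (x - y) * x ^ m * y ^ m)) * hxy

lemma tridiagCircInv_eq_scaled {n j : ℕ} (hj : j ≤ n) :
    tridiagCircInv x y n j = 2 ^ (n - j) / (x - y) *
      ((2 * x) ^ j / (2 ^ n - (2 * x) ^ n) - (2 * y) ^ j / (2 ^ n - (2 * y) ^ n)) := by
  have h2 : (2 : ℝ) ^ (n - j) * 2 ^ j = 2 ^ n := by rw [← pow_add, Nat.sub_add_cancel hj]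
  have scale (t : ℝ) : t ^ j / (1 - t ^ n) = 2 ^ (n - j) * ((2 * t) ^ j / (2 ^ n - (2 * t) ^ n)) := by
    rw [mul_pow, mul_pow, ← mul_one_sub, ← h2, mul_div_assoc', ← mul_assoc,
      mul_div_mul_left _ _ (by positivity)]
  unfold tridiagCircInv
  rw [scale x, scale y]
  ring

end

theorem inv_circ_tridiagVec {m : ℕ} {x y : ℝ} (hxy : x * y = 1) (hne : x ≠ y)
    (hx : x ^ (m + 3) ≠ 1) (hy : y ^ (m + 3) ≠ 1) :
    (circ (tridiagVec (m + 3) (-(x + y)) 1))⁻¹ = circ fun j => tridiagCircInv x y (m + 3) j := by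
  refine inv_eq_right_inv ?_
  rw [circ_mul_circ, ← circ_single_zero]
  congr 1
  funext d
  refine (sum_tridiagVec_mul _ _ (fun j => tridiagCircInv x y (m + 3) j) d).trans ?_
  rw [one_mul]
  exact add_neighbours_eq_single_of_recurrence (tridiagCircInv_recurrence hxy _) (tridiagCircInv_period _ hx hy)
    (tridiagCircInv_boundary _ hxy hne hx hy) d

theorem circ_3_1_1_inverse (n : ℕ) (hn : 3 < n)
    (B : Matrix (Fin n) (Fin n) ℝ)
    (hB : B = circ (fun k : Fin n => if k.val = 0 then (3:ℝ) else
      if k.val = 1 ∨ k.val = n - 1 then 1 else 0)) :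
    B⁻¹ = circ (fun j : Fin n => ((2:ℝ) ^ (n - j.val) / Real.sqrt 5) * ((-3 + Real.sqrt 5) ^ j.val / ((2:ℝ) ^ n - (-3 + Real.sqrt 5) ^ n) - (-3 - Real.sqrt 5) ^ j.val / ((2:ℝ) ^ n - (-3 - Real.sqrt 5) ^ n))) := by
  obtain ⟨m, rfl⟩ : ∃ m, n = m + 3 := ⟨n - 3, by omega⟩
  have h5 : √5 ^ 2 = 5 := Real.sq_sqrt (by norm_num)
  have h5lo : 2 < √5 := (Real.lt_sqrt (by norm_num)).mpr (by norm_num)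
  have h5hi : √5 < 3 := (Real.sqrt_lt' (by norm_num)).mpr (by norm_num)
  set x : ℝ := (-3 + √5) / 2 with hx_def
  set y : ℝ := (-3 - √5) / 2 with hy_def
  have hxy : x * y = 1 := by linear_combination (-1 / 4 : ℝ) * h5
  have hx : x ^ (m + 3) ≠ 1 := by
    rw [Ne, pow_eq_one_iff_of_ne_zero (by omega)]
    rintro (h | ⟨h, -⟩) <;> linarith
  have hy : y ^ (m + 3) ≠ 1 := by
    rw [Ne, pow_eq_one_iff_of_ne_zero (by omega)]
    rintro (h | ⟨h, -⟩) <;> linarith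
  have key := inv_circ_tridiagVec hxy (by linarith) hx hy
  rw [show -(x + y) = 3 by ring] at key
  rw [hB]
  refine key.trans (congrArg circ (funext fun j => ?_))
  rw [tridiagCircInv_eq_scaled j.is_lt.le, show x - y = √5 by ring, show 2 * x = -3 + √5 by ring,
    show 2 * y = -3 - √5 by ring]
end
end

section
/- Let n ≥ 4, let C be the (n−1)×(n−1) circulant matrix circ(1,0,…,0,1), X = 2(CCᵀ + I_{n−1})⁻¹((n−1)I_{n−1} − J_{n−1}), and Y = J_{n−1} + CᵀX. Then X² + YᵀY = (n−1)(J_{n−1} + 2X). -/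
/-!
Write `J` for the all-ones matrix, `A = CCᵀ + I` and `B = (n-1)I - J`, so that `X = 2A⁻¹B`.
Every row and every column of `C` sums to `2`, so `C` and `Cᵀ` send `J` to `2J` from either side;
hence `A` commutes with `J`, and so with `B`, which makes `X` symmetric. Since `J² = (n-1)J`
we have `BJ = 0` and `B² = (n-1)B`, so `XJ = JX = 0` and `XAX = 4A⁻¹B² = 2(n-1)X`.
Expanding `YᵀY = (J + XC)(J + CᵀX)`, the cross terms vanish and `XCCᵀX = XAX - X²`.
-/

open Matrix

noncomputable section

section Gram

variable {ι R : Type*} [Fintype ι] [DecidableEq ι] [CommRing R]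

theorem mul_self_add_transpose_mul_self_of_isSymm {J C X : Matrix ι ι R} {m t c : R}
    (hJ : J.IsSymm) (hJJ : J * J = m • J) (hCJ : C * J = c • J) (hX : X.IsSymm)
    (hXJ : X * J = 0) (hXAX : X * (C * Cᵀ + 1) * X = (m * t) • X) :
    X * X + (J + Cᵀ * X)ᵀ * (J + Cᵀ * X) = m • (J + t • X) := by
  have hXCJ : X * C * J = 0 := by rw [mul_assoc, hCJ, Matrix.mul_smul, hXJ, smul_zero]
  have hJCtX : J * Cᵀ * X = 0 := by
    simpa [transpose_mul, hJ.eq, hX.eq, mul_assoc] using congrArg transpose hXCJ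
  rw [transpose_add, transpose_mul, transpose_transpose, hJ.eq, hX.eq]
  calc X * X + (J + X * C) * (J + Cᵀ * X)
      = X * (C * Cᵀ + 1) * X + J * J + J * Cᵀ * X + X * C * J := by noncomm_ring
    _ = m • (J + t • X) := by rw [hXAX, hJJ, hXCJ, hJCtX]; module

theorem commute_mul_transpose_add_one {J C : Matrix ι ι R} {c : R} (hJ : J.IsSymm)
    (hCJ : C * J = c • J) (hJC : J * C = c • J) : Commute (C * Cᵀ + 1) J := by
  have hCtJ : Cᵀ * J = c • J := by simpa [transpose_mul, hJ.eq] using congrArg transpose hJC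
  have hJCt : J * Cᵀ = c • J := by simpa [transpose_mul, hJ.eq] using congrArg transpose hCJ
  show (C * Cᵀ + 1) * J = J * (C * Cᵀ + 1)
  rw [add_mul, mul_add, mul_assoc C, hCtJ, ← mul_assoc J, hJC, Matrix.mul_smul, Matrix.smul_mul,
    hCJ, hJCt, one_mul, mul_one]

theorem isSymm_nonsing_inv_mul_of_commute {A B : Matrix ι ι R} (hA : IsUnit A)
    (hAs : A.IsSymm) (hBs : B.IsSymm) (hAB : Commute A B) : (A⁻¹ * B).IsSymm := by
  rw [IsSymm, transpose_mul, hBs.eq, transpose_nonsing_inv, hAs.eq]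
  simpa [coe_units_inv] using (hAB.symm.units_inv_right (u := hA.unit)).eq

theorem nonsing_inv_mul_mul_self_mul {A B : Matrix ι ι R} (hA : IsUnit A) :
    A⁻¹ * B * A * (A⁻¹ * B) = A⁻¹ * (B * B) := by
  rw [mul_assoc (A⁻¹ * B), ← mul_assoc A, mul_nonsing_inv _ ((isUnit_iff_isUnit_det A).mp hA),
    one_mul, mul_assoc]

section SmulOneSub

variable {J : Matrix ι ι R} {m : R}

theorem smul_one_sub_mul_of_mul_self (hJJ : J * J = m • J) : (m • 1 - J) * J = 0 := by
  rw [sub_mul, Matrix.smul_mul, one_mul, hJJ, sub_self]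

theorem smul_one_sub_mul_self_of_mul_self (hJJ : J * J = m • J) :
    (m • 1 - J) * (m • 1 - J) = m • (m • 1 - J) := by
  rw [mul_sub, smul_one_sub_mul_of_mul_self hJJ, sub_zero, Matrix.mul_smul, mul_one]

end SmulOneSub

theorem mul_self_add_transpose_mul_self_eq {J C : Matrix ι ι R} {m t c : R}
    (hA : IsUnit (C * Cᵀ + 1)) (hJ : J.IsSymm) (hJJ : J * J = m • J) (hCJ : C * J = c • J)
    (hJC : J * C = c • J) (X : Matrix ι ι R) (hX : X = t • ((C * Cᵀ + 1)⁻¹ * (m • 1 - J))) :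
    X * X + (J + Cᵀ * X)ᵀ * (J + Cᵀ * X) = m • (J + t • X) := by
  set A := C * Cᵀ + 1
  set B := m • (1 : Matrix ι ι R) - J
  have hAs : A.IsSymm := (isSymm_mul_transpose_self C).add isSymm_one
  have hBs : B.IsSymm := (isSymm_one.smul m).sub hJ
  have hAB : Commute A B :=
    ((Commute.one_right A).smul_right m).sub_right (commute_mul_transpose_add_one hJ hCJ hJC)
  subst hX
  apply mul_self_add_transpose_mul_self_of_isSymm hJ hJJ hCJ
  · exact (isSymm_nonsing_inv_mul_of_commute hA hAs hBs hAB).smul t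
  · rw [Matrix.smul_mul, mul_assoc, smul_one_sub_mul_of_mul_self hJJ, mul_zero, smul_zero]
  · rw [Matrix.smul_mul, Matrix.mul_smul, Matrix.smul_mul, nonsing_inv_mul_mul_self_mul hA,
      smul_one_sub_mul_self_of_mul_self hJJ, Matrix.mul_smul]
    module

end Gram

theorem isUnit_mul_transpose_add_one {ι : Type*} [Fintype ι] [DecidableEq ι]
    (C : Matrix ι ι ℝ) : IsUnit (C * Cᵀ + 1) := by
  refine PosDef.isUnit (PosDef.posSemidef_add ?_ PosDef.one)
  simpa using posSemidef_self_mul_conjTranspose C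

theorem isSymm_Jmat (m : ℕ) : (Jmat m).IsSymm := rfl

theorem Jmat_mul_Jmat (m : ℕ) : Jmat m * Jmat m = (m : ℝ) • Jmat m := by
  ext i j
  simp [Jmat, mul_apply]

theorem circ_mul_Jmat {m : ℕ} [NeZero m] (v : Fin m → ℝ) :
    circ v * Jmat m = (∑ k, v k) • Jmat m := by
  ext i j
  simpa [circ, Jmat, mul_apply] using Fintype.sum_equiv (Equiv.subRight i) _ v (fun _ => rfl)

theorem Jmat_mul_circ {m : ℕ} [NeZero m] (v : Fin m → ℝ) :
    Jmat m * circ v = (∑ k, v k) • Jmat m := by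
  ext i j
  simpa [circ, Jmat, mul_apply] using Fintype.sum_equiv (Equiv.subLeft j) _ v (fun _ => rfl)

theorem sum_ite_val_eq_zero_or_eq_sub_two {n : ℕ} (hn : 3 ≤ n) :
    ∑ k : Fin (n - 1), (if k.val = 0 ∨ k.val = n - 2 then (1 : ℝ) else 0) = 2 := by
  have hsupp : Finset.univ.filter (fun k : Fin (n - 1) => k.val = 0 ∨ k.val = n - 2) =
      {⟨0, by omega⟩, ⟨n - 2, by omega⟩} := by
    ext k
    simp [Fin.ext_iff]
  rw [Finset.sum_boole, hsupp, Finset.card_pair (by simp [Fin.ext_iff]; omega)]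
  norm_num

theorem wheel_X_sq_add_YtY (n : ℕ) (hn : 4 ≤ n)
    (C X Y : Matrix (Fin (n-1)) (Fin (n-1)) ℝ)
    (hC : C = circ (fun k => if k.val = 0 ∨ k.val = n - 2 then (1:ℝ) else 0))
    (hX : X = (2:ℝ) • ((C * Cᵀ + 1)⁻¹ * (((n:ℝ) - 1) • (1 : Matrix (Fin (n-1)) (Fin (n-1)) ℝ) - Jmat (n-1))))
    (hY : Y = Jmat (n-1) + Cᵀ * X) :
    X * X + Yᵀ * Y = ((n:ℝ) - 1) • (Jmat (n-1) + (2:ℝ) • X) := by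
  have : NeZero (n - 1) := ⟨by omega⟩
  have hJJ : Jmat (n - 1) * Jmat (n - 1) = ((n : ℝ) - 1) • Jmat (n - 1) := by
    rw [Jmat_mul_Jmat, Nat.cast_sub (by omega), Nat.cast_one]
  have hrow := sum_ite_val_eq_zero_or_eq_sub_two (n := n) (by omega)
  have hCJ : C * Jmat (n - 1) = (2 : ℝ) • Jmat (n - 1) := by rw [hC, circ_mul_Jmat, hrow]
  have hJC : Jmat (n - 1) * C = (2 : ℝ) • Jmat (n - 1) := by rw [hC, Jmat_mul_circ, hrow]
  rw [hY]
  exact mul_self_add_transpose_mul_self_eq (isUnit_mul_transpose_add_one C) (isSymm_Jmat _)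
    hJJ hCJ hJC X hX
end
end

section
/- Let n ≥ 4, let C be the (n−1)×(n−1) circulant matrix circ(1,0,…,0,−1), X = (CCᵀ + I_{n−1})⁻¹(J_{n−1} − n·I_{n−1}), and Y = −CᵀX. Then 𝟏ᵀX = −𝟏ᵀ and C Y − X = n·I_{n−1} − J_{n−1}. -/
open Matrix

noncomputable section

/-!
Every column of `C` sums to `1 - 1 = 0`, so `𝟏ᵀ C = 0` and hence `𝟏ᵀ (C Cᵀ + I) = 𝟏ᵀ`:
the all-ones row is a left eigenvector of `C Cᵀ + I` (which is positive definite, so invertible)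
with eigenvalue `1`, and therefore also of its inverse. Thus
`𝟏ᵀ X = 𝟏ᵀ (J - n I) = ((n - 1) - n) 𝟏ᵀ = -𝟏ᵀ`. For the second identity,
`C Y - X = -(C Cᵀ + I) X = -(J - n I)`.
-/

theorem ones_mul_circ {ι : Type*} {m : ℕ} [NeZero m] (v : Fin m → ℝ) :
    (of fun (_ : ι) (_ : Fin m) => (1 : ℝ)) * circ v
      = (∑ k, v k) • of fun (_ : ι) (_ : Fin m) => (1 : ℝ) := by
  ext i j
  simp only [Matrix.mul_apply, circ, of_apply, one_mul, Matrix.smul_apply, smul_eq_mul, mul_one]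
  exact Equiv.sum_comp (Equiv.subLeft j) v

theorem sum_ite_zero_one_ite_neg_one {m p : ℕ} (hp₀ : p ≠ 0) (hpm : p < m) :
    ∑ k : Fin m, (if k.val = 0 then (1 : ℝ) else if k.val = p then -1 else 0) = 0 := by
  rw [Fintype.sum_eq_add (⟨0, by omega⟩ : Fin m) ⟨p, hpm⟩ (by simp [Fin.ext_iff, hp₀.symm])]
  · simp [hp₀]
  · rintro k ⟨hk₀, hkp⟩
    simp [Fin.ext_iff] at hk₀ hkp
    simp [hk₀, hkp]

theorem posDef_mul_transpose_add_one {m : Type*} [Fintype m] [DecidableEq m]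
    (A : Matrix m m ℝ) : (A * Aᵀ + 1).PosDef :=
  PosDef.posSemidef_add (by simpa using posSemidef_self_mul_conjTranspose A) PosDef.one

theorem ones_mul_Jmat_sub_smul_one {ι : Type*} (m : ℕ) (c : ℝ) :
    (of fun (_ : ι) (_ : Fin m) => (1 : ℝ)) * (Jmat m - c • 1)
      = ((m : ℝ) - c) • of fun (_ : ι) (_ : Fin m) => (1 : ℝ) := by
  ext i j
  simp [Jmat, Matrix.mul_apply, Matrix.one_apply]

theorem wheel_oriented_X_rowsum_and_CYX (n : ℕ) (hn : 4 ≤ n)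
    (C X Y : Matrix (Fin (n-1)) (Fin (n-1)) ℝ)
    (hC : C = circ (fun k => if k.val = 0 then (1:ℝ) else if k.val = n - 2 then -1 else 0))
    (hX : X = (C * Cᵀ + 1)⁻¹ * (Jmat (n-1) - (n:ℝ) • (1 : Matrix (Fin (n-1)) (Fin (n-1)) ℝ)))
    (hY : Y = -(Cᵀ * X)) :
    (Matrix.of fun (_ : Fin 1) (_ : Fin (n-1)) => (1:ℝ)) * X = -(Matrix.of fun (_ : Fin 1) (_ : Fin (n-1)) => (1:ℝ)) ∧
      C * Y - X = (n:ℝ) • (1 : Matrix (Fin (n-1)) (Fin (n-1)) ℝ) - Jmat (n-1) := by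
  have : NeZero (n - 1) := ⟨by omega⟩
  set u : Matrix (Fin 1) (Fin (n-1)) ℝ := of fun _ _ => 1
  set M := C * Cᵀ + 1 with hM
  have hMdet : IsUnit M.det := (posDef_mul_transpose_add_one C).det_pos.ne'.isUnit
  have huC : u * C = 0 := by
    rw [hC, ones_mul_circ, sum_ite_zero_one_ite_neg_one (by omega) (by omega), zero_smul]
  have huM : u * M = u := by
    rw [Matrix.mul_add, ← Matrix.mul_assoc, huC, Matrix.zero_mul, zero_add, Matrix.mul_one]
  have huMinv : u * M⁻¹ = u := by simpa [huM] using mul_nonsing_inv_cancel_right M u hMdet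
  have hMX : M * X = Jmat (n-1) - (n:ℝ) • 1 := by rw [hX, mul_nonsing_inv_cancel_left M _ hMdet]
  constructor
  · rw [hX, ← Matrix.mul_assoc, huMinv, ones_mul_Jmat_sub_smul_one,
      Nat.cast_sub (by omega : 1 ≤ n), Nat.cast_one, sub_sub_cancel_left, neg_smul, one_smul]
  · calc C * Y - X = -(M * X) := by
          rw [hY, Matrix.mul_neg, ← Matrix.mul_assoc, hM, Matrix.add_mul, Matrix.one_mul]; abel
      _ = (n:ℝ) • 1 - Jmat (n-1) := by rw [hMX, neg_sub]
end
end

section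
/- Let n > 3 be an integer. The inverse of the n×n circulant matrix circ(3,−1,0,…,0,−1) is the circulant matrix circ(a_0, a_1, …, a_{n−1}) where, for 0 ≤ j ≤ n−1, a_j = (2^{n−j}/√5) · [ (3−√5)^j / (2^n − (3−√5)^n) − (3+√5)^j / (2^n − (3+√5)^n) ]. -/
/-!
With `r, s = (3 ∓ √5) / 2`, the roots of `t² - 3t + 1`, the claimed inverse is
`circ ((g_r - g_s) / √5)` where `g_r j = r ^ j / (1 - r ^ n)`.
Since `3 r^j - r^(j-1) - r^(j+1) = 0`, applying `circ (3, -1, 0, …, 0, -1)` to `g_r` leaves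
only the wrap-around defects `r⁻¹ δ₀ - δ_(n-1)`. The `δ_(n-1)` terms cancel in the
difference, and `r⁻¹ - s⁻¹ = s - r = √5`.
-/

open Matrix

noncomputable section

theorem circ_eq_transpose_circulant {m : ℕ} (v : Fin m → ℝ) : circ v = (circulant v)ᵀ := rfl

theorem circ_mul_circ_s16 {m : ℕ} (u v : Fin m → ℝ) :
    circ u * circ v = circ (circulant u *ᵥ v) := by
  rw [circ_eq_transpose_circulant, circ_eq_transpose_circulant, circ_eq_transpose_circulant,
    ← transpose_mul, Fin.circulant_mul_comm, Fin.circulant_mul]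

theorem circ_single_zero_one (m : ℕ) : circ (Pi.single 0 1 : Fin (m + 1) → ℝ) = 1 := by
  rw [circ_eq_transpose_circulant, circulant_single_one, transpose_one]

theorem circulant_mulVec_single_one {ι α : Type*} [AddGroup ι] [Fintype ι] [DecidableEq ι]
    [NonAssocSemiring α] (a : ι → α) (k : ι) :
    circulant a *ᵥ Pi.single k 1 = fun d => a (d - k) := by
  rw [mulVec_single_one]
  rfl

def cycleStencil (m : ℕ) : Fin (m + 1) → ℝ :=
  3 • Pi.single 0 1 - Pi.single 1 1 - Pi.single (-1) 1

theorem ite_val_eq_cycleStencil (m : ℕ) :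
    (fun k : Fin (m + 3) => if k.val = 0 then (3 : ℝ) else
      if k.val = 1 ∨ k.val = m + 3 - 1 then -1 else 0) = cycleStencil (m + 2) := by
  funext k
  simp only [cycleStencil, Pi.sub_apply, Pi.smul_apply, Pi.single_apply, Fin.ext_iff,
    Fin.coe_neg_one, Fin.val_zero, Fin.val_one]
  split_ifs <;> norm_num <;> omega

theorem circulant_mulVec_cycleStencil {m : ℕ} (a : Fin (m + 1) → ℝ) :
    circulant a *ᵥ cycleStencil m = fun d => 3 * a d - a (d - 1) - a (d + 1) := by
  simp only [cycleStencil, mulVec_sub, mulVec_smul, circulant_mulVec_single_one, sub_zero,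
    sub_neg_eq_add]
  funext d
  simp

def wrappedGeom (n : ℕ) (r : ℝ) (j : Fin n) : ℝ := r ^ (j : ℕ) / (1 - r ^ n)

theorem wrappedGeom_stencil {m : ℕ} {r : ℝ} (hr : r ^ 2 - 3 * r + 1 = 0)
    (hrn : r ^ (m + 1) ≠ 1) (d : Fin (m + 1)) :
    3 * wrappedGeom (m + 1) r d - wrappedGeom (m + 1) r (d - 1)
        - wrappedGeom (m + 1) r (d + 1)
      = (if d = 0 then r⁻¹ else 0) - (if d = Fin.last m then 1 else 0) := by
  have hr0 : r ≠ 0 := by rintro rfl; norm_num at hr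
  have hD : 1 - r ^ (m + 1) ≠ 0 := sub_ne_zero.mpr hrn.symm
  simp only [wrappedGeom, Fin.coe_sub_one, Fin.val_add_one]
  split_ifs with h0 hl hl
  · have hm : m = 0 := by simpa [h0, Fin.ext_iff, eq_comm] using hl
    subst h0 hm
    simp only [Fin.val_zero, pow_zero]
    field_simp
    linear_combination -hr
  · subst h0
    simp only [Fin.val_zero, pow_zero, zero_add, pow_one]
    field_simp
    linear_combination -hr
  · obtain ⟨k, hk⟩ : ∃ k, (d : ℕ) = k + 1 :=
      Nat.exists_eq_succ_of_ne_zero (Fin.val_ne_iff.mpr h0)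
    obtain rfl : m = k + 1 := by rw [← hk, hl, Fin.val_last]
    rw [hk, Nat.add_sub_cancel]
    field_simp
    linear_combination -r ^ k * hr
  · obtain ⟨k, hk⟩ : ∃ k, (d : ℕ) = k + 1 :=
      Nat.exists_eq_succ_of_ne_zero (Fin.val_ne_iff.mpr h0)
    rw [hk, Nat.add_sub_cancel]
    field_simp
    linear_combination -r ^ k * hr

theorem circulant_wrappedGeom_mulVec_cycleStencil {m : ℕ} {r : ℝ}
    (hr : r ^ 2 - 3 * r + 1 = 0) (hrn : r ^ (m + 1) ≠ 1) :
    circulant (wrappedGeom (m + 1) r) *ᵥ cycleStencil m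
      = r⁻¹ • Pi.single 0 1 - Pi.single (Fin.last m) 1 := by
  rw [circulant_mulVec_cycleStencil]
  funext d
  rw [wrappedGeom_stencil hr hrn]
  simp [Pi.single_apply]

theorem two_pow_sub_mul_pow_div {n j : ℕ} (hj : j ≤ n) (x : ℝ) :
    2 ^ (n - j) * x ^ j / (2 ^ n - x ^ n) = (x / 2) ^ j / (1 - (x / 2) ^ n) := by
  rw [← mul_div_mul_left ((x / 2) ^ j) _ (pow_ne_zero n (two_ne_zero' ℝ)), div_pow, div_pow]
  congr 1
  · rw [pow_sub₀ _ two_ne_zero hj]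
    ring
  · field_simp

theorem two_pow_sub_div_mul_eq_smul_wrappedGeom (n : ℕ) (c x y : ℝ) :
    (fun j : Fin n => (2 ^ (n - j.val) / c) *
        (x ^ j.val / (2 ^ n - x ^ n) - y ^ j.val / (2 ^ n - y ^ n)))
      = c⁻¹ • (wrappedGeom n (x / 2) - wrappedGeom n (y / 2)) := by
  funext j
  simp only [wrappedGeom, Pi.smul_apply, Pi.sub_apply, smul_eq_mul,
    ← two_pow_sub_mul_pow_div j.is_le']
  ring

theorem circ_3_neg1_neg1_inverse (n : ℕ) (hn : 3 < n)
    (B : Matrix (Fin n) (Fin n) ℝ)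
    (hB : B = circ (fun k : Fin n => if k.val = 0 then (3:ℝ) else
      if k.val = 1 ∨ k.val = n - 1 then -1 else 0)) :
    B⁻¹ = circ (fun j : Fin n => ((2:ℝ) ^ (n - j.val) / Real.sqrt 5) * ((3 - Real.sqrt 5) ^ j.val / ((2:ℝ) ^ n - (3 - Real.sqrt 5) ^ n) - (3 + Real.sqrt 5) ^ j.val / ((2:ℝ) ^ n - (3 + Real.sqrt 5) ^ n))) := by
  obtain ⟨m, rfl⟩ : ∃ m, n = m + 3 := ⟨n - 3, by omega⟩
  have h5 : √5 ^ 2 = 5 := Real.sq_sqrt (by norm_num)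
  have h5lt : √5 < 3 := by nlinarith [Real.sqrt_nonneg 5]
  have h5gt : 1 < √5 := by nlinarith [Real.sqrt_nonneg 5]
  set r : ℝ := (3 - √5) / 2 with hr_def
  set s : ℝ := (3 + √5) / 2 with hs_def
  have hr : r ^ 2 - 3 * r + 1 = 0 := by linear_combination (1 / 4) * h5
  have hs : s ^ 2 - 3 * s + 1 = 0 := by linear_combination (1 / 4) * h5
  have hrn : r ^ (m + 3) ≠ 1 := (pow_lt_one₀ (by linarith) (by linarith) (by omega)).ne
  have hsn : s ^ (m + 3) ≠ 1 := (one_lt_pow₀ (by linarith) (by omega)).ne'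
  have hrs : r⁻¹ - s⁻¹ = √5 := by
    have hrs1 : r * s = 1 := by linear_combination (-1 / 4) * h5
    rw [inv_eq_of_mul_eq_one_right hrs1, inv_eq_of_mul_eq_one_left hrs1]
    ring
  subst hB
  refine inv_eq_left_inv ?_
  rw [two_pow_sub_div_mul_eq_smul_wrappedGeom, ite_val_eq_cycleStencil, circ_mul_circ_s16,
    circulant_smul, circulant_sub, smul_mulVec, sub_mulVec,
    circulant_wrappedGeom_mulVec_cycleStencil hr hrn,
    circulant_wrappedGeom_mulVec_cycleStencil hs hsn, sub_sub_sub_cancel_right, ← sub_smul, hrs,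
    smul_smul, inv_mul_cancel₀ (by positivity), one_smul, circ_single_zero_one]
end
end

section
/- Let n ≥ 5 and let C be the (n−1)×(n−1) circulant matrix circ(1,0,…,0,−1). Then X = (CCᵀ + I_{n−1})⁻¹(J_{n−1} − n·I_{n−1}) equals the circulant matrix circ(b_0, b_1, …, b_{n−2}) where, for 0 ≤ j ≤ n−2, b_j = 1 + (n·2^{n−1−j}/√5) · [ (3+√5)^j / (2^{n−1} − (3+√5)^{n−1}) − (3−√5)^j / (2^{n−1} − (3−√5)^{n−1}) ]. -/
open Matrix

noncomputable section

/-!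
`C Cᵀ + 1` is the circulant `circ(3, -1, 0, …, 0, -1)`; it is positive definite, so it suffices
to check that it maps `circ b` to `J - n I`, i.e. that `3 b_d - b_{d-1} - b_{d+1} = 1 - n [d = 0]`
with indices mod `m = n - 1`. With `r, s = (3 ± √5) / 2` the roots of `x² - 3x + 1`, the claimed
vector is `b_j = 1 + (n / √5) (r^j / (1 - r^m) - s^j / (1 - s^m))`. Each term `r^j / (1 - r^m)`
satisfies the recurrence away from the wrap-around; at `d = m - 1` the defects of the two terms
cancel, and at `d = 0` they differ by `s - r = -√5`, which produces the `-n`.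
-/

def cycleIncidence (m : ℕ) [NeZero m] : Matrix (Fin m) (Fin m) ℝ :=
  circ (Pi.single 0 1 - Pi.single (-1) 1)

section Circulant

variable {m : ℕ}

lemma circ_add (u w : Fin m → ℝ) : circ (u + w) = circ u + circ w := rfl

lemma circ_sub (u w : Fin m → ℝ) : circ (u - w) = circ u - circ w := rfl

lemma Jmat_eq_circ : Jmat m = circ 1 := rfl

variable [NeZero m]

lemma cycleIncidence_eq_circ_ite (hm : 1 < m) :
    cycleIncidence m
      = circ (fun k => if k.val = 0 then 1 else if k.val = m - 1 then -1 else 0) := by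
  obtain ⟨m, rfl⟩ := Nat.exists_eq_add_one_of_ne_zero (NeZero.ne m)
  rw [cycleIncidence]
  congr 1
  funext k
  by_cases h0 : k.val = 0
  · simp [Pi.single_apply, Fin.ext_iff, h0]
    omega
  · simp [Pi.single_apply, Fin.ext_iff, h0, apply_ite]

lemma transpose_circ (v : Fin m → ℝ) : (circ v)ᵀ = circ (fun k => v (-k)) := by
  ext i j
  simp [circ, neg_sub]

lemma circ_single_mul_circ (a : Fin m) (c : ℝ) (w : Fin m → ℝ) :
    circ (Pi.single a c) * circ w = circ (fun d => c * w (d - a)) := by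
  ext i j
  simp [circ, mul_apply, Pi.single_apply, sub_eq_iff_eq_add', sub_sub]

lemma circ_single_sub_single_mul_circ (a a' : Fin m) (w : Fin m → ℝ) :
    circ (Pi.single a 1 - Pi.single a' 1) * circ w = circ (fun d => w (d - a) - w (d - a')) := by
  rw [circ_sub, sub_mul, circ_single_mul_circ, circ_single_mul_circ, ← circ_sub]
  simp only [one_mul]
  rfl

lemma smul_one_eq_circ (c : ℝ) :
    c • (1 : Matrix (Fin m) (Fin m) ℝ) = circ (Pi.single 0 c) := by
  ext i j
  simp [circ, one_apply, Pi.single_apply, sub_eq_zero, eq_comm]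

lemma cycleIncidence_mul_transpose_add_one_mul_circ (b : Fin m → ℝ) :
    (cycleIncidence m * (cycleIncidence m)ᵀ + 1) * circ b
      = circ (fun d => 3 * b d - b (d - 1) - b (d + 1)) := by
  have hDt : (fun k : Fin m => (Pi.single 0 1 - Pi.single (-1) 1 : Fin m → ℝ) (-k))
      = Pi.single 0 1 - Pi.single 1 1 := by
    funext k
    simp [Pi.single_apply, neg_eq_iff_eq_neg]
  rw [cycleIncidence, transpose_circ, hDt, add_mul, one_mul, mul_assoc,
    circ_single_sub_single_mul_circ, circ_single_sub_single_mul_circ, ← circ_add]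
  congr 1
  funext d
  simp only [Pi.add_apply, sub_zero, sub_neg_eq_add, add_sub_cancel_right]
  ring

end Circulant

lemma isUnit_det_mul_transpose_add_one_s17 {ι : Type*} [Fintype ι] [DecidableEq ι]
    (M : Matrix ι ι ℝ) : IsUnit (M * Mᵀ + 1).det := by
  have hM := posSemidef_self_mul_conjTranspose M
  rw [conjTranspose_eq_transpose_of_trivial] at hM
  exact (isUnit_iff_isUnit_det _).mp (PosDef.posSemidef_add hM PosDef.one).isUnit

/-- For `|r| < 1` this is `∑ₖ r ^ (j + k m)`, the geometric sequence wound around the cycle of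
length `m`, so its cyclic second difference vanishes except at the seam. -/
def periodizedGeom (m : ℕ) (r : ℝ) (j : ℕ) : ℝ := r ^ j / (1 - r ^ m)

section PeriodizedGeom

variable {m : ℕ} {r : ℝ}

lemma periodizedGeom_succ (j : ℕ) :
    periodizedGeom m r (j + 1) = r * periodizedGeom m r j := by
  rw [periodizedGeom, periodizedGeom, pow_succ', mul_div_assoc]

lemma periodizedGeom_self (hr : r ^ m ≠ 1) :
    periodizedGeom m r m = periodizedGeom m r 0 - 1 := by
  have : 1 - r ^ m ≠ 0 := sub_ne_zero.mpr hr.symm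
  rw [periodizedGeom, periodizedGeom, pow_zero]
  field_simp
  ring

lemma periodizedGeom_secondDiff [NeZero m] (hr : r * (3 - r) = 1) (hrm : r ^ m ≠ 1) (d : Fin m) :
    3 * periodizedGeom m r d - periodizedGeom m r ↑(d - 1) - periodizedGeom m r ↑(d + 1)
      = (Pi.single 0 (3 - r) : Fin m → ℝ) d - (Pi.single (-1) 1 : Fin m → ℝ) d := by
  obtain ⟨k, rfl⟩ := Nat.exists_eq_add_one_of_ne_zero (NeZero.ne m)
  set g := periodizedGeom (k + 1) r
  have hsucc (j : ℕ) : g (j + 1) = r * g j := periodizedGeom_succ j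
  have hself : g (k + 1) = g 0 - 1 := periodizedGeom_self hrm
  have hlast : (-1 : Fin (k + 1)) = Fin.last k := Fin.ext (by simp)
  rw [Fin.coe_sub_one, Fin.val_add_one]
  simp only [Pi.single_apply, hlast]
  split_ifs with h0 hl hl
  · have hk : k = 0 := by simpa [hl] using congrArg Fin.val h0
    subst hk
    rw [h0, Fin.val_zero]
    linear_combination g 0 * hr - (2 - r) * (hsucc 0).symm.trans hself
  · rw [h0, Fin.val_zero, zero_add]
    have h1 : g 1 = r * g 0 := hsucc 0
    linear_combination g k * hr - (3 - r) * (hsucc k).symm.trans hself - h1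
  · obtain ⟨j, rfl⟩ : ∃ j, k = j + 1 :=
      Nat.exists_eq_add_one_of_ne_zero fun hk => h0 (by subst hk; exact Fin.eq_zero d)
    rw [hl, Fin.val_last, Nat.add_sub_cancel]
    linear_combination g j * hr + (3 - r) * hsucc j - hsucc (j + 1) + hself
  · obtain ⟨j, hj⟩ : ∃ j, (d : ℕ) = j + 1 :=
      Nat.exists_eq_add_one_of_ne_zero (Fin.val_ne_zero_iff.mpr h0)
    rw [hj, Nat.add_sub_cancel]
    linear_combination g j * hr + (3 - r) * hsucc j - hsucc (j + 1)

end PeriodizedGeom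

lemma secondDiff_one_add_mul_periodizedGeom_sub {m : ℕ} [NeZero m] {r s c : ℝ}
    (hr : r * (3 - r) = 1) (hs : s * (3 - s) = 1) (hrm : r ^ m ≠ 1) (hsm : s ^ m ≠ 1)
    (b : ℕ → ℝ) (hb : ∀ j, b j = 1 + c * (periodizedGeom m r j - periodizedGeom m s j))
    (d : Fin m) :
    3 * b d - b ↑(d - 1) - b ↑(d + 1) = 1 - (Pi.single 0 (c * (r - s)) : Fin m → ℝ) d := by
  have hgr := periodizedGeom_secondDiff hr hrm d
  have hgs := periodizedGeom_secondDiff hs hsm d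
  simp only [hb, Pi.single_apply] at hgr hgs ⊢
  split_ifs at hgr hgs ⊢ <;> linear_combination c * (hgr - hgs)

lemma cycleIncidence_mul_transpose_add_one_mul_circ_periodizedGeom {m : ℕ} [NeZero m] (c : ℝ) :
    (cycleIncidence m * (cycleIncidence m)ᵀ + 1) *
        circ (fun d : Fin m => 1 + c / √5 *
          (periodizedGeom m ((3 + √5) / 2) d - periodizedGeom m ((3 - √5) / 2) d))
      = Jmat m - c • 1 := by
  have h5 : √5 ^ 2 = 5 := Real.sq_sqrt (by norm_num)
  have h5gt : 1 < √5 := by nlinarith [Real.sqrt_nonneg 5]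
  have h5lt : √5 < 3 := by nlinarith [Real.sqrt_nonneg 5]
  have hm : m ≠ 0 := NeZero.ne m
  have hr : (3 + √5) / 2 * (3 - (3 + √5) / 2) = 1 := by linear_combination (-1 / 4 : ℝ) * h5
  have hs : (3 - √5) / 2 * (3 - (3 - √5) / 2) = 1 := by linear_combination (-1 / 4 : ℝ) * h5
  have hrm : ((3 + √5) / 2) ^ m ≠ 1 := (one_lt_pow₀ (by linarith) hm).ne'
  have hsm : ((3 - √5) / 2) ^ m ≠ 1 := (pow_lt_one₀ (by linarith) (by linarith) hm).ne
  rw [cycleIncidence_mul_transpose_add_one_mul_circ, Jmat_eq_circ, smul_one_eq_circ, ← circ_sub]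
  congr 1
  funext d
  rw [secondDiff_one_add_mul_periodizedGeom_sub hr hs hrm hsm _ (fun _ => rfl),
    show c / √5 * ((3 + √5) / 2 - (3 - √5) / 2) = c by field_simp; ring]
  rfl

lemma two_pow_sub_mul_div (x : ℝ) {j m : ℕ} (hj : j ≤ m) :
    2 ^ (m - j) * (x ^ j / (2 ^ m - x ^ m)) = (x / 2) ^ j / (1 - (x / 2) ^ m) := by
  have h2 : (2 : ℝ) ^ m = 2 ^ (m - j) * 2 ^ j := by rw [← pow_add, Nat.sub_add_cancel hj]
  rw [div_pow, div_pow, one_sub_div (by positivity), div_div_div_eq, h2]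
  field_simp

theorem wheel_oriented_X_entries (n : ℕ) (hn : 5 ≤ n)
    (C X : Matrix (Fin (n-1)) (Fin (n-1)) ℝ)
    (hC : C = circ (fun k => if k.val = 0 then (1:ℝ) else if k.val = n - 2 then -1 else 0))
    (hX : X = (C * Cᵀ + 1)⁻¹ * (Jmat (n-1) - (n:ℝ) • (1 : Matrix (Fin (n-1)) (Fin (n-1)) ℝ))) :
    X = circ (fun j : Fin (n-1) => 1 + ((n:ℝ) * (2:ℝ) ^ (n-1-j.val) / Real.sqrt 5) * ((3 + Real.sqrt 5) ^ j.val / ((2:ℝ) ^ (n-1) - (3 + Real.sqrt 5) ^ (n-1)) - (3 - Real.sqrt 5) ^ j.val / ((2:ℝ) ^ (n-1) - (3 - Real.sqrt 5) ^ (n-1)))) := by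
  have : NeZero (n - 1) := ⟨by omega⟩
  have hC' : C = cycleIncidence (n - 1) := by
    rw [hC, cycleIncidence_eq_circ_ite (by omega), show n - 1 - 1 = n - 2 by omega]
  rw [hX, hC', ← cycleIncidence_mul_transpose_add_one_mul_circ_periodizedGeom (n : ℝ),
    nonsing_inv_mul_cancel_left _ _ (isUnit_det_mul_transpose_add_one_s17 _)]
  congr 1
  funext j
  have hj : j.val ≤ n - 1 := j.isLt.le
  rw [periodizedGeom, periodizedGeom, ← two_pow_sub_mul_div _ hj, ← two_pow_sub_mul_div _ hj]
  ring
end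
end
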